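/- Let p be a probability mass function on a finite nonempty type Q with MAP probability p* := max_{q∈Q} p(q), and let ε, δ ∈ (0,1) and M ≥ 1. Under the product measure P^⊗M on Q^M, with sample maximum p̂_M := max_{i<M} p(q_i), the probability of the event { p̂_M < p*·(1−ε) and (1 − p̂_M/(1−ε))^M ≤ δ } is at most δ. In other words, the data-dependent certificate (ε, δ(p̂_M, ε)) with δ(p̂, ε) := (1 − p̂/(1−ε))^M issued by Algorithm 2 (budget-PAC-MAP) is sound. -/

import Mathlib

open Finset

/-- The probability of event `E` under `m` i.i.d. draws from the pmf `p`
on a finite type `Q` (i.e., the `m`-fold product measure of `p`). -/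
noncomputable def iidProb {Q : Type*} [Fintype Q] (p : Q → ℝ) (m : ℕ)
    (E : Set (Fin m → Q)) : ℝ :=
  ∑ x : Fin m → Q, E.indicator (fun y => ∏ i, p (y i)) x

/-- The maximum of `p` over a finset `S`, defined to be `0` if `S` is empty. -/
noncomputable def sampleMax {Q : Type*} (p : Q → ℝ) (S : Finset Q) : ℝ :=
  if h : S.Nonempty then S.sup' h p else 0

/-- The sample maximum `p̂_M = max_{i<M} p (x i)` of a sample `x : Fin M → Q`. -/
noncomputable def sampleMaxVec {Q : Type*} [DecidableEq Q] (p : Q → ℝ) {m : ℕ}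
    (x : Fin m → Q) : ℝ :=
  sampleMax p (Finset.image x Finset.univ)

/-! If the certificate is issued, the sample maximum is a mass `p q` with `p q < p* (1 - ε)` and
`(1 - p q / (1 - ε)) ^ M ≤ δ`. Let `q₀` carry the largest such mass. On the event every draw has
mass at most `p q₀ < p*`, so every draw misses a mode, which has probability at most
`(1 - p*) ^ M ≤ (1 - p q₀ / (1 - ε)) ^ M ≤ δ`. -/

section SampleMax

variable {Q : Type*} [DecidableEq Q] (p : Q → ℝ) {m : ℕ}

lemma le_sampleMaxVec (x : Fin m → Q) (i : Fin m) : p (x i) ≤ sampleMaxVec p x := by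
  have hmem : x i ∈ univ.image x := mem_image_of_mem x (mem_univ i)
  rw [sampleMaxVec, sampleMax, dif_pos ⟨_, hmem⟩]
  exact le_sup' p hmem

lemma exists_sampleMaxVec_eq (hm : 0 < m) (x : Fin m → Q) :
    ∃ i, sampleMaxVec p x = p (x i) := by
  have hne : (univ.image x).Nonempty := ⟨x ⟨0, hm⟩, mem_image_of_mem x (mem_univ _)⟩
  obtain ⟨q, hq, hmax⟩ := exists_mem_eq_sup' hne p
  obtain ⟨i, -, rfl⟩ := mem_image.mp hq
  exact ⟨i, by rw [sampleMaxVec, sampleMax, dif_pos hne, hmax]⟩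

lemma setOf_sampleMaxVec_eq_empty_or_subset [Fintype Q] (hm : 0 < m) (C : ℝ → Prop) :
    {x : Fin m → Q | C (sampleMaxVec p x)} = ∅ ∨
      ∃ q, C (p q) ∧ {x : Fin m → Q | C (sampleMaxVec p x)} ⊆ {x | sampleMaxVec p x ≤ p q} := by
  classical
  have hmem : ∀ x : Fin m → Q, C (sampleMaxVec p x) →
      ∃ i, x i ∈ univ.filter (fun q => C (p q)) ∧ sampleMaxVec p x = p (x i) := fun x hx => by
    obtain ⟨i, hi⟩ := exists_sampleMaxVec_eq p hm x
    exact ⟨i, mem_filter.2 ⟨mem_univ _, hi ▸ hx⟩, hi⟩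
  rcases (univ.filter (fun q => C (p q))).eq_empty_or_nonempty with hB | hB
  · refine .inl (Set.eq_empty_of_forall_notMem fun x hx => ?_)
    obtain ⟨i, hi, -⟩ := hmem x hx
    simp [hB] at hi
  obtain ⟨q₀, hq₀, hsup⟩ := exists_mem_eq_sup' hB p
  refine .inr ⟨q₀, (mem_filter.1 hq₀).2, fun x hx => ?_⟩
  obtain ⟨i, hi, hmax⟩ := hmem x hx
  exact (hmax.trans_le (le_sup' p hi)).trans hsup.le

end SampleMax

section IidProb

variable {Q : Type*} [Fintype Q] (p : Q → ℝ) (m : ℕ)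

lemma iidProb_mono (hp0 : ∀ q, 0 ≤ p q) {E F : Set (Fin m → Q)} (hEF : E ⊆ F) :
    iidProb p m E ≤ iidProb p m F :=
  sum_le_sum fun _ _ =>
    Set.indicator_le_indicator_of_subset hEF (fun _ => prod_nonneg fun _ _ => hp0 _) _

lemma iidProb_empty : iidProb p m ∅ = 0 := by
  simp [iidProb]

lemma iidProb_forall_mem (S : Finset Q) :
    iidProb p m {x | ∀ i, x i ∈ S} = (∑ q ∈ S, p q) ^ m := by
  classical
  have hS : {x : Fin m → Q | ∀ i, x i ∈ S} = (Fintype.piFinset fun _ : Fin m => S : Set _) := by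
    ext x; simp
  rw [iidProb, hS, sum_indicator_subset _ (subset_univ _), ← Fin.prod_const, prod_univ_sum]

end IidProb

section Mode

variable {Q : Type*} [Fintype Q] [Nonempty Q] (p : Q → ℝ) (hp0 : ∀ q, 0 ≤ p q)
  (hp1 : ∑ q, p q = 1)
include hp0 hp1

lemma sup'_le_one : univ.sup' univ_nonempty p ≤ 1 :=
  sup'_le _ _ fun q _ => hp1 ▸ single_le_sum (fun q _ => hp0 q) (mem_univ q)

lemma sum_filter_le_le_one_sub_sup' {t : ℝ} (ht : t < univ.sup' univ_nonempty p) :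
    ∑ q with p q ≤ t, p q ≤ 1 - univ.sup' univ_nonempty p := by
  classical
  obtain ⟨qmax, -, hqmax⟩ := exists_mem_eq_sup' univ_nonempty p
  have hsub : univ.filter (p · ≤ t) ⊆ univ.erase qmax := fun q hq =>
    mem_erase.2 ⟨by rintro rfl; linarith [(mem_filter.1 hq).2], mem_univ q⟩
  calc ∑ q with p q ≤ t, p q ≤ ∑ q ∈ univ.erase qmax, p q :=
        sum_le_sum_of_subset_of_nonneg hsub fun q _ _ => hp0 q
    _ = 1 - univ.sup' univ_nonempty p := by rw [sum_erase_eq_sub (mem_univ _), hp1, hqmax]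

lemma iidProb_sampleMaxVec_le_of_lt_sup' [DecidableEq Q] (m : ℕ) {t : ℝ}
    (ht : t < univ.sup' univ_nonempty p) :
    iidProb p m {x | sampleMaxVec p x ≤ t} ≤ (1 - univ.sup' univ_nonempty p) ^ m := by
  have hsub : {x : Fin m → Q | sampleMaxVec p x ≤ t} ⊆ {x | ∀ i, x i ∈ univ.filter (p · ≤ t)} :=
    fun x hx i => mem_filter.2 ⟨mem_univ _, (le_sampleMaxVec p x i).trans hx⟩
  calc iidProb p m {x | sampleMaxVec p x ≤ t}
      ≤ (∑ q with p q ≤ t, p q) ^ m := iidProb_forall_mem p m _ ▸ iidProb_mono p m hp0 hsub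
    _ ≤ (1 - univ.sup' univ_nonempty p) ^ m :=
        pow_le_pow_left₀ (sum_nonneg fun q _ => hp0 q)
          (sum_filter_le_le_one_sub_sup' p hp0 hp1 ht) m

end Mode

/-- soundness of the budget-PAC-MAP certificate. Under `M` i.i.d. draws,
the probability that `p̂_M < p*(1-ε)` while `(1 - p̂_M/(1-ε))^M ≤ δ` is at most `δ`. -/
theorem stmt12 {Q : Type*} [Fintype Q] [Nonempty Q] [DecidableEq Q] (p : Q → ℝ)
    (hp0 : ∀ q, 0 ≤ p q) (hp1 : ∑ q, p q = 1)
    (ε δ : ℝ) (hε : ε ∈ Set.Ioo (0 : ℝ) 1) (hδ : δ ∈ Set.Ioo (0 : ℝ) 1)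
    (M : ℕ) (hM : 1 ≤ M) :
    iidProb p M
        {x | sampleMaxVec p x < (Finset.univ.sup' Finset.univ_nonempty p) * (1 - ε) ∧
          (1 - sampleMaxVec p x / (1 - ε)) ^ M ≤ δ} ≤ δ := by
  set pmax := univ.sup' univ_nonempty p
  rcases setOf_sampleMaxVec_eq_empty_or_subset p hM
      (fun v => v < pmax * (1 - ε) ∧ (1 - v / (1 - ε)) ^ M ≤ δ) with hE | ⟨q₀, ⟨hq₀max, hq₀δ⟩, hE⟩
  · calc _ ≤ iidProb p M ∅ := iidProb_mono p M hp0 hE.subset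
      _ = 0 := iidProb_empty p M
      _ ≤ δ := hδ.1.le
  have hε' : 0 < 1 - ε := sub_pos.2 hε.2
  have hq₀lt : p q₀ / (1 - ε) < pmax := (div_lt_iff₀ hε').2 hq₀max
  have hq₀pmax : p q₀ < pmax :=
    (le_div_self (hp0 q₀) hε' (by linarith [hε.1])).trans_lt hq₀lt
  calc _ ≤ iidProb p M {x | sampleMaxVec p x ≤ p q₀} := iidProb_mono p M hp0 hE
    _ ≤ (1 - pmax) ^ M := iidProb_sampleMaxVec_le_of_lt_sup' p hp0 hp1 M hq₀pmax
    _ ≤ (1 - p q₀ / (1 - ε)) ^ M :=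
        pow_le_pow_left₀ (sub_nonneg.2 (sup'_le_one p hp0 hp1)) (by linarith) M
    _ ≤ δ := hq₀δ
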